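/- arXiv:1408.6939 — 5 statements merged into one kernel-verified Lean document; each statement's English description precedes it below -/
import Mathlib

section
/- A permutation w ∈ S_{n+1} is triangular (i.e., for all i < k ≤ j < ℓ with w(i) > w(j) and w(k) > w(ℓ) one has w(i) > w(ℓ) and w(k) ≥ w(j)) if and only if the set {(i,j) : 1 ≤ i ≤ j ≤ n, w(i) > w(j+1)} is triangular as a subset of positive roots, i.e., for all pairs (i₁,j₁), (i₂,j₂) in the set with i₁ ≤ i₂, j₁ ≤ j₂ (not both equal), and i₂ ≤ j₁+1, the pair (i₁,j₂) is in the set, and if moreover i₂ ≤ j₁, then (i₂,j₁) is in the set. -/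
/-- `w ∈ S_{n+1}` (a permutation of `{1,…,n+1}`, encoded as a permutation of `ℕ`
fixing everything outside `[1, n+1]`) is triangular. -/
def IsTriangularPerm (n : ℕ) (w : Equiv.Perm ℕ) : Prop :=
  ∀ i k j l : ℕ, 1 ≤ i → i < k → k ≤ j → j < l → l ≤ n + 1 →
    w j < w i → w l < w k → w l < w i ∧ w j ≤ w k

/-- The inversion set `{(i,j) : 1 ≤ i ≤ j ≤ n, w(i) > w(j+1)}`,
encoding `−R_w^- ∩ R^+` via `(i,j) ↔ α_i + ⋯ + α_j`. -/
def InvPairs (n : ℕ) (w : Equiv.Perm ℕ) : Set (ℕ × ℕ) :=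
  {p | 1 ≤ p.1 ∧ p.1 ≤ p.2 ∧ p.2 ≤ n ∧ w (p.2 + 1) < w p.1}

/-- A subset of positive roots (pairs `(i,j)`, `1 ≤ i ≤ j ≤ n`) is triangular. -/
def IsTriangularSet (A : Set (ℕ × ℕ)) : Prop :=
  ∀ i₁ j₁ i₂ j₂ : ℕ, (i₁, j₁) ∈ A → (i₂, j₂) ∈ A → i₁ ≤ i₂ → j₁ ≤ j₂ →
    (i₁, j₁) ≠ (i₂, j₂) → i₂ ≤ j₁ + 1 →
    (i₁, j₂) ∈ A ∧ (i₂ ≤ j₁ → (i₂, j₁) ∈ A)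

theorem stmt0 (n : ℕ) (w : Equiv.Perm ℕ)
    (hw : ∀ m, m ∉ Set.Icc 1 (n + 1) → w m = m) :
    IsTriangularPerm n w ↔ IsTriangularSet (InvPairs n w) := by
  constructor
  · intro H i₁ j₁ i₂ j₂ h1 h2 hii hjj hne hij
    obtain ⟨a1, a2, a3, a4⟩ := h1
    obtain ⟨b1, b2, b3, b4⟩ := h2
    rcases eq_or_lt_of_le hii with rfl | hii'
    · rcases eq_or_lt_of_le hjj with rfl | hjj'
      · exact absurd rfl hne
      · exact ⟨⟨a1, le_trans a2 hjj, b3, b4⟩, fun h => ⟨a1, a2, a3, a4⟩⟩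
    · rcases eq_or_lt_of_le hjj with rfl | hjj'
      · exact ⟨⟨a1, a2, a3, a4⟩, fun h => ⟨b1, h, a3, b4⟩⟩
      · have key := H i₁ i₂ (j₁ + 1) (j₂ + 1) a1 hii' hij (by omega) (by omega) a4 b4
        refine ⟨⟨a1, by omega, b3, key.1⟩, fun h => ⟨b1, h, a3, ?_⟩⟩
        have hne2 : w (j₁ + 1) ≠ w i₂ := fun he => by
          have := w.injective he; omega
        exact lt_of_le_of_ne key.2 hne2
  · intro H i k j l hi hik hkj hjl hl hji hlk
    have hj1 : j - 1 + 1 = j := by omega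
    have hl1 : l - 1 + 1 = l := by omega
    have hA1 : (i, j - 1) ∈ InvPairs n w := ⟨hi, by omega, by omega, by rw [hj1]; exact hji⟩
    have hA2 : (k, l - 1) ∈ InvPairs n w := ⟨by omega, by omega, by omega, by rw [hl1]; exact hlk⟩
    have key := H i (j - 1) k (l - 1) hA1 hA2 (le_of_lt hik) (by omega)
      (by intro he; have := congrArg Prod.fst he; simp at this; omega) (by omega)
    obtain ⟨⟨_, _, _, c4⟩, c5⟩ := key
    rw [hl1] at c4
    refine ⟨c4, ?_⟩
    rcases eq_or_lt_of_le hkj with rfl | hkj'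
    · exact le_refl _
    · obtain ⟨_, _, _, d4⟩ := c5 (by omega)
      rw [hj1] at d4
      exact le_of_lt d4
end

section
/- Every Kempf element of S_{n+1} is triangular, but the converse fails: in S_4, the permutation w = s_2 s_3 s_1 is triangular and is not a Kempf element. -/
/-- The segment `s_ℓ s_{ℓ−1} ⋯ s_i` (the empty product, i.e. the identity, if `ℓ < i`),
where `s_t = (t, t+1)`. -/
def seg (i ℓ : ℕ) : Equiv.Perm ℕ :=
  (((List.range' i (ℓ + 1 - i)).reverse).map fun t => Equiv.swap t (t + 1)).prod

/-- `w ∈ S_{n+1}` is a Kempf element: `w = w₁ w₂ ⋯ w_n` where `w_i = s_{ℓ_i} ⋯ s_i`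
is a right-end segment of `u_i = s_n ⋯ s_i` (empty if `ℓ_i = i − 1`), and
`ℓ(w_i) ≤ ℓ(w_{i+1}) + 1` whenever `w_{i+1} ≠ u_{i+1}` (i.e. `ℓ_{i+1} ≠ n`). -/
def IsKempf (n : ℕ) (w : Equiv.Perm ℕ) : Prop :=
  ∃ ℓ : ℕ → ℕ,
    (∀ i, 1 ≤ i → i ≤ n → i - 1 ≤ ℓ i ∧ ℓ i ≤ n) ∧
    (∀ i, 1 ≤ i → i + 1 ≤ n → ℓ (i + 1) ≠ n →
      ℓ i + 1 - i ≤ (ℓ (i + 1) + 1 - (i + 1)) + 1) ∧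
    w = ((List.range' 1 n).map fun i => seg i (ℓ i)).prod

lemma seg_eq_one (i ℓ : ℕ) (h : ℓ + 1 ≤ i) : seg i ℓ = 1 := by
  unfold seg
  have : ℓ + 1 - i = 0 := by omega
  simp [this]

lemma seg_succ (i ℓ : ℕ) (h : i ≤ ℓ + 1) :
    seg i (ℓ + 1) = Equiv.swap (ℓ + 1) (ℓ + 2) * seg i ℓ := by
  unfold seg
  have h1 : ℓ + 1 + 1 - i = (ℓ + 1 - i) + 1 := by omega
  rw [h1, List.range'_concat]
  have h2 : i + 1 * (ℓ + 1 - i) = ℓ + 1 := by omega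
  have h3 : i + (ℓ + 1 - i) = ℓ + 1 := by omega
  simp [h2, h3]

lemma seg_apply (i : ℕ) (hi : 1 ≤ i) :
    ∀ ℓ, i - 1 ≤ ℓ → ∀ x, seg i ℓ x =
      if x = i then ℓ + 1 else if i < x ∧ x ≤ ℓ + 1 then x - 1 else x := by
  intro ℓ hℓ
  induction ℓ, hℓ using Nat.le_induction with
  | base =>
    intro x
    have : seg i (i - 1) = 1 := seg_eq_one _ _ (by omega)
    rw [this]
    simp only [Equiv.Perm.one_apply]
    split_ifs <;> omega
  | succ ℓ hℓ ih =>
    intro x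
    rw [seg_succ i ℓ (by omega), Equiv.Perm.mul_apply, ih x, Equiv.swap_apply_def]
    split_ifs <;> omega

/-- The partial product `seg a (ℓ a) * ⋯ * seg n (ℓ n)`. -/
def Wprod (n : ℕ) (ℓ : ℕ → ℕ) (a : ℕ) : Equiv.Perm ℕ :=
  ((List.range' a (n + 1 - a)).map fun i => seg i (ℓ i)).prod

lemma Wprod_top (n : ℕ) (ℓ : ℕ → ℕ) : Wprod n ℓ (n + 1) = 1 := by
  unfold Wprod; simp

lemma Wprod_succ (n : ℕ) (ℓ : ℕ → ℕ) (a : ℕ) (h : a ≤ n) :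
    Wprod n ℓ a = seg a (ℓ a) * Wprod n ℓ (a + 1) := by
  unfold Wprod
  have h1 : n + 1 - a = (n + 1 - (a + 1)) + 1 := by omega
  rw [h1, List.range'_succ]
  simp

lemma Wprod_main (n : ℕ) (ℓ : ℕ → ℕ)
    (hb : ∀ i, 1 ≤ i → i ≤ n → i - 1 ≤ ℓ i ∧ ℓ i ≤ n)
    (hmono : ∀ i, 1 ≤ i → i + 1 ≤ n → ℓ i ≤ ℓ (i + 1)) :
    ∀ c a, 1 ≤ a → a ≤ n + 1 → n + 1 - a ≤ c →
      (∀ x, x < a → Wprod n ℓ a x = x) ∧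
      (∀ x, a ≤ x → a ≤ Wprod n ℓ a x) ∧
      (a ≤ n → Wprod n ℓ a a = ℓ a + 1) ∧
      (∀ x y z, a ≤ x → x < y → y < z →
        ¬(Wprod n ℓ a y < Wprod n ℓ a z ∧ Wprod n ℓ a z < Wprod n ℓ a x)) := by
  intro c
  induction c with
  | zero =>
    intro a ha1 ha2 hc
    have haeq : a = n + 1 := by omega
    subst haeq
    rw [Wprod_top]
    refine ⟨fun x _ => rfl, fun x hx => hx, by omega, ?_⟩
    intro x y z hax hxy hyz
    simp only [Equiv.Perm.one_apply]
    omega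
  | succ c ih =>
    intro a ha1 ha2 hc
    rcases Nat.lt_or_ge a (n + 1) with han | han
    · -- a ≤ n
      have han' : a ≤ n := by omega
      obtain ⟨F1, F2, F3, F4⟩ := ih (a + 1) (by omega) (by omega) (by omega)
      obtain ⟨hbl, hbu⟩ := hb a (by omega) han'
      set m := ℓ a + 1 with hm
      have ham : a ≤ m := by omega
      have happ : ∀ x, Wprod n ℓ a x = seg a (ℓ a) (Wprod n ℓ (a + 1) x) := by
        intro x
        rw [Wprod_succ n ℓ a han', Equiv.Perm.mul_apply]
      have hseg : ∀ v, seg a (ℓ a) v =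
          if v = a then m else if a < v ∧ v ≤ m then v - 1 else v := by
        intro v
        rw [seg_apply a ha1 (ℓ a) (by omega) v]
      -- value of g on v ≥ a+1
      have hg : ∀ v, a + 1 ≤ v → seg a (ℓ a) v = if v ≤ m then v - 1 else v := by
        intro v hv
        rw [hseg v]
        split_ifs <;> omega
      have part1 : ∀ x, x < a → Wprod n ℓ a x = x := by
        intro x hx
        rw [happ, F1 x (by omega), hseg]
        split_ifs <;> omega
      have hWa : Wprod n ℓ a a = m := by
        rw [happ, F1 a (by omega), hseg]
        simp
      have part2 : ∀ x, a ≤ x → a ≤ Wprod n ℓ a x := by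
        intro x hx
        rcases Nat.eq_or_lt_of_le hx with h | h
        · rw [← h, hWa]; omega
        · rw [happ, hg _ (F2 x (by omega))]
          have := F2 x (by omega)
          split_ifs <;> omega
      refine ⟨part1, part2, fun _ => hWa, ?_⟩
      intro x y z hax hxy hyz ⟨h1, h2⟩
      have hvy := F2 y (by omega)
      have hvz := F2 z (by omega)
      rw [happ y, happ z, hg _ hvy, hg _ hvz] at h1
      rw [happ z, hg _ hvz] at h2
      rcases Nat.eq_or_lt_of_le hax with hxa | hxa
      · -- x = a
        rw [← hxa, hWa] at h2
        have hz_le : Wprod n ℓ (a + 1) z ≤ m := by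
          by_contra hcon
          rw [if_neg (by omega)] at h2; omega
        rw [if_pos hz_le] at h1 h2
        have hy_le : Wprod n ℓ (a + 1) y ≤ m := by
          by_contra hcon
          rw [if_neg (by omega)] at h1; omega
        rw [if_pos hy_le] at h1
        have hyz' : Wprod n ℓ (a + 1) y < Wprod n ℓ (a + 1) z := by omega
        rcases Nat.lt_or_ge a n with hn | hn
        · -- a + 1 ≤ n
          have hv1 : Wprod n ℓ (a + 1) (a + 1) = ℓ (a + 1) + 1 := F3 (by omega)
          have hmle : m ≤ ℓ (a + 1) + 1 := by
            have := hmono a (by omega) (by omega); omega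
          have hzne : Wprod n ℓ (a + 1) z ≠ Wprod n ℓ (a + 1) (a + 1) := by
            intro hcon
            have := (Wprod n ℓ (a + 1)).injective hcon
            omega
          have hyne : y ≠ a + 1 := by
            intro hcon
            rw [hcon, hv1] at hyz'
            omega
          exact F4 (a + 1) y z (le_refl _) (by omega) hyz
            ⟨hyz', by rw [hv1]; omega⟩
        · -- a = n, so Wprod (a+1) = 1
          have : a = n := by omega
          rw [this, Wprod_top] at hz_le
          simp only [Equiv.Perm.one_apply] at hz_le
          omega
      · -- x > a
        have hvx := F2 x (by omega)
        rw [happ x, hg _ hvx] at h2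
        refine F4 x y z (by omega) hxy hyz ⟨?_, ?_⟩
        · by_contra hcon
          push_neg at hcon
          revert h1
          split_ifs <;> omega
        · by_contra hcon
          push_neg at hcon
          revert h2
          split_ifs <;> omega
    · -- a = n + 1
      have : a = n + 1 := by omega
      subst this
      rw [Wprod_top]
      refine ⟨fun x _ => rfl, fun x hx => hx, by omega, ?_⟩
      intro x y z hax hxy hyz
      simp only [Equiv.Perm.one_apply]
      omega

/-- Kempf elements avoid the pattern 312. -/
lemma IsKempf.avoid312 {n : ℕ} {w : Equiv.Perm ℕ} (hk : IsKempf n w) :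
    ∀ x y z, 1 ≤ x → x < y → y < z → ¬(w y < w z ∧ w z < w x) := by
  obtain ⟨ℓ, hb, hcond, hw⟩ := hk
  have hmono : ∀ i, 1 ≤ i → i + 1 ≤ n → ℓ i ≤ ℓ (i + 1) := by
    intro i h1 h2
    obtain ⟨hb1, hb2⟩ := hb i h1 (by omega)
    obtain ⟨hb3, hb4⟩ := hb (i + 1) (by omega) h2
    by_cases hn : ℓ (i + 1) = n
    · omega
    · have := hcond i h1 h2 hn
      omega
  have hW : w = Wprod n ℓ 1 := by
    rw [hw]; unfold Wprod; norm_num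
  rw [hW]
  exact (Wprod_main n ℓ hb hmono (n + 1 - 1) 1 le_rfl (by omega) le_rfl).2.2.2

/-- Every Kempf element is triangular, but the converse fails:
`w = s₂ s₃ s₁ ∈ S₄` is triangular and not Kempf. -/
theorem stmt3 :
    (∀ (n : ℕ) (w : Equiv.Perm ℕ), IsKempf n w → IsTriangularPerm n w) ∧
    IsTriangularPerm 3 (Equiv.swap 2 3 * Equiv.swap 3 4 * Equiv.swap 1 2) ∧
    ¬ IsKempf 3 (Equiv.swap 2 3 * Equiv.swap 3 4 * Equiv.swap 1 2) := by
  have e1 : (Equiv.swap 2 3 * Equiv.swap 3 4 * Equiv.swap 1 2 : Equiv.Perm ℕ) 1 = 3 := by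
    simp [Equiv.swap_apply_def]
  have e2 : (Equiv.swap 2 3 * Equiv.swap 3 4 * Equiv.swap 1 2 : Equiv.Perm ℕ) 2 = 1 := by
    simp [Equiv.swap_apply_def]
  have e3 : (Equiv.swap 2 3 * Equiv.swap 3 4 * Equiv.swap 1 2 : Equiv.Perm ℕ) 3 = 4 := by
    simp [Equiv.swap_apply_def]
  have e4 : (Equiv.swap 2 3 * Equiv.swap 3 4 * Equiv.swap 1 2 : Equiv.Perm ℕ) 4 = 2 := by
    simp [Equiv.swap_apply_def]
  refine ⟨?_, ?_, ?_⟩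
  · intro n w hk i k j l hi hik hkj hjl hln hji hlk
    have A := hk.avoid312
    constructor
    · rcases Nat.eq_or_lt_of_le hkj with hkj' | hkj'
      · rw [← hkj'] at hji; omega
      · by_contra hcon
        exact A k j l (by omega) hkj' hjl ⟨by omega, hlk⟩
    · by_contra hcon
      have hkj' : k < j := by
        rcases Nat.eq_or_lt_of_le hkj with h | h
        · rw [h] at hcon; omega
        · exact h
      exact A i k j hi hik hkj' ⟨by omega, hji⟩
  · intro i k j l hi hik hkj hjl hln hji hlk
    have b1 : i ≤ 4 := by omega
    have b2 : 1 ≤ k ∧ k ≤ 4 := by omega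
    have b3 : 1 ≤ j ∧ j ≤ 4 := by omega
    have b4 : 1 ≤ l ∧ l ≤ 4 := by omega
    obtain ⟨b2a, b2b⟩ := b2
    obtain ⟨b3a, b3b⟩ := b3
    obtain ⟨b4a, b4b⟩ := b4
    interval_cases i <;> interval_cases k <;> interval_cases j <;> interval_cases l <;>
      simp_all [e1, e2, e3, e4]
  · intro hk
    exact hk.avoid312 1 2 4 le_rfl (by omega) (by omega) ⟨by rw [e2, e4]; omega,
      by rw [e4, e1]; omega⟩
end

section
/- The longest element of any parabolic subgroup of S_{n+1} generated by simple reflections is triangular. -/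
/-- The Coxeter length of `w ∈ S_{n+1}`: the number of inversions. -/
def invNum (n : ℕ) (w : Equiv.Perm ℕ) : ℕ :=
  ((Finset.Icc 1 (n + 1) ×ˢ Finset.Icc 1 (n + 1)).filter
    fun p => p.1 < p.2 ∧ w p.2 < w p.1).card

def parabolicSubgroup (J : Set ℕ) : Subgroup (Equiv.Perm ℕ) :=
  Subgroup.closure ((fun i => Equiv.swap i (i + 1)) '' J)

def inversions (n : ℕ) (w : Equiv.Perm ℕ) : Finset (ℕ × ℕ) :=
  (Finset.Icc 1 (n + 1) ×ˢ Finset.Icc 1 (n + 1)).filter fun p => p.1 < p.2 ∧ w p.2 < w p.1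

lemma invNum_eq_card_inversions (n : ℕ) (w : Equiv.Perm ℕ) :
    invNum n w = (inversions n w).card :=
  rfl

namespace parabolicSubgroup

variable {J : Set ℕ} {w : Equiv.Perm ℕ}

lemma apply_le_iff (hw : w ∈ parabolicSubgroup J) {c : ℕ} (hc : c ∉ J) (x : ℕ) :
    w x ≤ c ↔ x ≤ c := by
  induction hw using Subgroup.closure_induction generalizing x with
  | mem g hg =>
    obtain ⟨i, hi, rfl⟩ := hg
    have hic : i ≠ c := fun h => hc (h ▸ hi)
    rw [Equiv.swap_apply_def]
    split_ifs <;> omega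
  | one => rfl
  | mul a b _ _ iha ihb => rw [Equiv.Perm.mul_apply, iha, ihb]
  | inv a _ iha => simpa using (iha (a⁻¹ x)).symm

lemma mem_of_inversion (hw : w ∈ parabolicSubgroup J) {a b : ℕ}
    (hinv : w b < w a) {c : ℕ} (hac : a ≤ c) (hcb : c < b) : c ∈ J := by
  by_contra hc
  have hwa : w a ≤ c := (apply_le_iff hw hc a).mpr hac
  have hb : b ≤ c := (apply_le_iff hw hc b).mp (hinv.le.trans hwa)
  omega

end parabolicSubgroup

section SimpleReflection

variable {n c : ℕ}

lemma swap_succ_apply_mem_Icc (hc1 : 1 ≤ c) (hcn : c ≤ n) {a : ℕ}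
    (ha : a ∈ Finset.Icc 1 (n + 1)) : Equiv.swap c (c + 1) a ∈ Finset.Icc 1 (n + 1) := by
  rw [Finset.mem_Icc] at ha ⊢
  rw [Equiv.swap_apply_def]
  split_ifs <;> omega

lemma swap_succ_apply_lt_apply {a b : ℕ} (hab : a < b) (hne : (a, b) ≠ (c, c + 1)) :
    Equiv.swap c (c + 1) a < Equiv.swap c (c + 1) b := by
  simp only [ne_eq, Prod.mk.injEq] at hne
  rw [Equiv.swap_apply_def, Equiv.swap_apply_def]
  split_ifs <;> omega

/-- Right multiplication by `s_c` relabels the inversions of `w` by `s_c` and adds `(c, c + 1)`. -/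
lemma invNum_lt_invNum_mul_swap (hc1 : 1 ≤ c) (hcn : c ≤ n) {w : Equiv.Perm ℕ}
    (hasc : w c < w (c + 1)) : invNum n w < invNum n (w * Equiv.swap c (c + 1)) := by
  set s := Equiv.swap c (c + 1)
  have hinj : Function.Injective (Prod.map s s) := s.injective.prodMap s.injective
  have hmaps : (inversions n w).image (Prod.map s s) ⊆ inversions n (w * s) := by
    simp only [Finset.subset_iff, Finset.mem_image, inversions, Finset.mem_filter,
      Finset.mem_product]
    rintro _ ⟨⟨a, b⟩, ⟨⟨ha, hb⟩, hab, hwab⟩, rfl⟩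
    have hne : (a, b) ≠ (c, c + 1) := by
      rintro ⟨⟩
      exact hwab.not_gt hasc
    refine ⟨⟨swap_succ_apply_mem_Icc hc1 hcn ha, swap_succ_apply_mem_Icc hc1 hcn hb⟩,
      swap_succ_apply_lt_apply hab hne, ?_⟩
    simpa [s] using hwab
  have hnew : (c, c + 1) ∈ inversions n (w * s) := by
    rw [inversions, Finset.mem_filter]
    simp only [Finset.mem_product, Finset.mem_Icc, Equiv.Perm.mul_apply, s,
      Equiv.swap_apply_left, Equiv.swap_apply_right]
    omega
  have hnot : (c, c + 1) ∉ (inversions n w).image (Prod.map s s) := by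
    simp only [Finset.mem_image, inversions, Finset.mem_filter, not_exists, not_and]
    rintro ⟨a, b⟩ ⟨_, hab, _⟩ heq
    simp only [Prod.map_apply, Prod.mk.injEq, s, Equiv.swap_apply_eq_iff, Equiv.swap_apply_left,
      Equiv.swap_apply_right] at heq
    omega
  rw [invNum_eq_card_inversions, invNum_eq_card_inversions,
    ← Finset.card_image_of_injective _ hinj]
  exact Finset.card_lt_card ((Finset.ssubset_iff_of_subset hmaps).mpr ⟨_, hnew, hnot⟩)

end SimpleReflection

lemma apply_succ_lt_of_forall_invNum_le {n : ℕ} {J : Set ℕ} {w : Equiv.Perm ℕ}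
    (hw : w ∈ parabolicSubgroup J)
    (hlongest : ∀ v ∈ parabolicSubgroup J, invNum n v ≤ invNum n w)
    {c : ℕ} (hc : c ∈ J) (hc1 : 1 ≤ c) (hcn : c ≤ n) : w (c + 1) < w c := by
  by_contra! hle
  have hasc : w c < w (c + 1) :=
    hle.lt_of_ne (w.injective.ne (Nat.ne_of_lt c.lt_succ_self))
  have hmem : w * Equiv.swap c (c + 1) ∈ parabolicSubgroup J :=
    mul_mem hw (Subgroup.subset_closure ⟨c, hc, rfl⟩)
  exact (invNum_lt_invNum_mul_swap hc1 hcn hasc).not_ge (hlongest _ hmem)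

theorem stmt6_general (n : ℕ) (J : Set ℕ) (w : Equiv.Perm ℕ)
    (hw : w ∈ Subgroup.closure ((fun i => Equiv.swap i (i + 1)) '' J))
    (hlongest : ∀ v ∈ Subgroup.closure ((fun i => Equiv.swap i (i + 1)) '' J),
      invNum n v ≤ invNum n w) :
    IsTriangularPerm n w := by
  intro i k j l hi hik hkj hjl hl hji hlk
  have hblock : ∀ c, i ≤ c → c < l → c ∈ J := fun c hic hcl =>
    (lt_or_ge c j).elim (parabolicSubgroup.mem_of_inversion hw hji hic)
      fun hjc => parabolicSubgroup.mem_of_inversion hw hlk (by omega) hcl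
  have hanti : StrictAntiOn w (Set.Icc i l) :=
    strictAntiOn_of_add_one_lt Set.ordConnected_Icc fun c _ hc hc1 =>
      apply_succ_lt_of_forall_invNum_le hw hlongest (hblock c hc.1 hc1.2) (hi.trans hc.1)
        (Nat.le_of_add_le_add_right (hc1.2.trans hl))
  exact ⟨hanti ⟨le_rfl, by omega⟩ ⟨by omega, le_rfl⟩ (by omega),
    hanti.antitoneOn ⟨hik.le, by omega⟩ ⟨by omega, hjl.le⟩ hkj⟩

/-- The longest element of any subgroup of `S_{n+1}` generated by simple reflections
`s_i = (i, i+1)`, `i ∈ J ⊆ {1,…,n}`, is triangular. -/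
theorem stmt6 (n : ℕ) (J : Set ℕ) (hJ : J ⊆ Set.Icc 1 n) (w : Equiv.Perm ℕ)
    (hw : w ∈ Subgroup.closure ((fun i => Equiv.swap i (i + 1)) '' J))
    (hlongest : ∀ v ∈ Subgroup.closure ((fun i => Equiv.swap i (i + 1)) '' J),
      invNum n v ≤ invNum n w) :
    IsTriangularPerm n w :=
  stmt6_general n J w hw hlongest
end

section
/- For a marked poset (P, M, λ), the marked order polytope O(P,M,λ) and the marked chain polytope C(P,M,λ) have the same Ehrhart polynomial; in particular they contain the same number of lattice points. -/
namespace Stmt13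

open Finset Classical

variable {P : Type} [Fintype P] [PartialOrder P]

/-- sup of X over elements strictly below p -/
noncomputable def sb (X : P → ℝ) (p : P) : ℝ :=
  sSup (Set.range fun q : {q : P // q < p} => X q.1)

lemma sb_bdd (X : P → ℝ) (p : P) :
    BddAbove (Set.range fun q : {q : P // q < p} => X q.1) :=
  (Set.finite_range _).bddAbove

lemma le_sb {X : P → ℝ} {p q : P} (h : q < p) : X q ≤ sb X p :=
  le_csSup (sb_bdd X p) ⟨⟨q, h⟩, rfl⟩

lemma sb_le {X : P → ℝ} {p : P} (hne : ∃ q, q < p) {b : ℝ}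
    (hb : ∀ q, q < p → X q ≤ b) : sb X p ≤ b := by
  obtain ⟨q, hq⟩ := hne
  exact csSup_le ⟨X q, ⟨⟨q, hq⟩, rfl⟩⟩ (by rintro _ ⟨⟨r, hr⟩, rfl⟩; exact hb r hr)

lemma sb_mem {X : P → ℝ} {p : P} (hne : ∃ q, q < p) :
    ∃ q, q < p ∧ sb X p = X q := by
  obtain ⟨q, hq⟩ := hne
  have hfin : (Set.range fun r : {r : P // r < p} => X r.1).Finite := Set.finite_range _
  have hne' : (Set.range fun r : {r : P // r < p} => X r.1).Nonempty := ⟨X q, ⟨⟨q, hq⟩, rfl⟩⟩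
  obtain ⟨⟨r, hr⟩, h⟩ := hne'.csSup_mem hfin
  exact ⟨r, hr, h.symm⟩

lemma sb_congr {X Y : P → ℝ} {p : P} (h : ∀ q < p, X q = Y q) : sb X p = sb Y p := by
  unfold sb
  congr 1
  exact congrArg _ (funext fun q => h q.1 q.2)

noncomputable def Xrec (M : Set P) (f g : P → ℝ) (p : P) : ℝ :=
  wellFounded_lt.fix
    (fun p IH =>
      if p ∈ M then f p
      else g p + sSup (Set.range fun q : {q : P // q < p} => IH q.1 q.2)) p

lemma Xrec_eq (M : Set P) (f g : P → ℝ) (p : P) :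
    Xrec M f g p = if p ∈ M then f p else g p + sb (Xrec M f g) p := by
  rw [Xrec, WellFounded.fix_eq]
  rfl

noncomputable def Xo (M : Set P) (f : P → ℝ) (x : P → ℝ) (p : P) : ℝ :=
  if p ∈ M then f p else x p

noncomputable def Phi (M : Set P) (f : P → ℝ) (x : P → ℝ) (p : P) : ℝ :=
  if p ∈ M then 0 else x p - sb (Xo M f x) p

noncomputable def Psi (M : Set P) (f : P → ℝ) (y : P → ℝ) (p : P) : ℝ :=
  if p ∈ M then 0 else Xrec M f y p

lemma sum_int {s : ℕ} {v : ℕ → ℝ} (h : ∀ k < s, ∃ j : ℤ, v k = j) :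
    ∃ j : ℤ, ∑ k ∈ range s, v k = j := by
  induction s with
  | zero => exact ⟨0, by simp⟩
  | succ n ih =>
    obtain ⟨j, hj⟩ := ih fun k hk => h k (hk.trans n.lt_succ_self)
    obtain ⟨i, hi⟩ := h n n.lt_succ_self
    exact ⟨j + i, by rw [Finset.sum_range_succ, hj, hi]; push_cast; ring⟩

lemma ncard_eq_of_bijOn {α β : Type*} {f : α → β} {s : Set α} {t : Set β}
    (h : Set.BijOn f s t) : s.ncard = t.ncard := by
  rw [← h.image_eq, Set.ncard_image_of_injOn h.injOn]

end Stmt13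

/-- For a marked poset `(P, M, λ)` (with `M` containing all minimal and maximal
elements and `λ` order-preserving on `M`), the marked order polytope and the marked
chain polytope have the same Ehrhart polynomial: for every dilation factor `t`, the
numbers of lattice points of the `t`-th dilates agree. -/
theorem stmt13 (P : Type) [Fintype P] [PartialOrder P] (M : Set P)
    (hmin : ∀ x : P, (∀ y : P, ¬ y < x) → x ∈ M)
    (hmax : ∀ x : P, (∀ y : P, ¬ x < y) → x ∈ M)
    (lam : P → ℕ)
    (hlam : ∀ m₁ ∈ M, ∀ m₂ ∈ M, m₁ ≤ m₂ → lam m₁ ≤ lam m₂) :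
    ∀ t : ℕ,
      Set.ncard {x : P → ℝ |
        (∀ m ∈ M, x m = 0) ∧ (∀ p, p ∉ M → ∃ k : ℤ, x p = k) ∧
        (∀ p q, p ∉ M → q ∉ M → p < q → x p ≤ x q) ∧
        (∀ m ∈ M, ∀ p, p ∉ M → m < p → (t : ℝ) * lam m ≤ x p) ∧
        (∀ m ∈ M, ∀ p, p ∉ M → p < m → x p ≤ (t : ℝ) * lam m)} =
      Set.ncard {x : P → ℝ |
        (∀ m ∈ M, x m = 0) ∧ (∀ p, p ∉ M → ∃ k : ℤ, x p = k) ∧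
        (∀ p, p ∉ M → 0 ≤ x p) ∧
        (∀ (s : ℕ) (c : ℕ → P), ∀ m₁ ∈ M, ∀ m₂ ∈ M, 1 ≤ s →
          (∀ k < s, c k ∉ M) → (∀ k, k + 1 < s → c k < c (k + 1)) →
          m₂ < c 0 → c (s - 1) < m₁ →
          ∑ k ∈ Finset.range s, x (c k) ≤ (t : ℝ) * lam m₁ - (t : ℝ) * lam m₂)} := by
  intro t
  classical
  open Stmt13 in
  set f : P → ℝ := fun p => (t : ℝ) * lam p with hf
  have hfmono : ∀ m₁ ∈ M, ∀ m₂ ∈ M, m₁ ≤ m₂ → f m₁ ≤ f m₂ := by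
    intro m₁ h₁ m₂ h₂ hle
    have := hlam m₁ h₁ m₂ h₂ hle
    simp only [hf]
    exact mul_le_mul_of_nonneg_left (by exact_mod_cast this) (by positivity)
  have hfint : ∀ p : P, ∃ k : ℤ, f p = k := fun p => ⟨(t : ℤ) * lam p, by push_cast [hf]; ring⟩
  have hbelow : ∀ p : P, p ∉ M → ∃ q, q < p := by
    intro p hp
    by_contra h
    push_neg at h
    exact hp (hmin p h)
  refine Stmt13.ncard_eq_of_bijOn (f := Stmt13.Phi M f) ?_
  -- MapsTo Φ O C
  have hMapΦ : Set.MapsTo (Stmt13.Phi M f)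
      {x : P → ℝ |
        (∀ m ∈ M, x m = 0) ∧ (∀ p, p ∉ M → ∃ k : ℤ, x p = k) ∧
        (∀ p q, p ∉ M → q ∉ M → p < q → x p ≤ x q) ∧
        (∀ m ∈ M, ∀ p, p ∉ M → m < p → (t : ℝ) * lam m ≤ x p) ∧
        (∀ m ∈ M, ∀ p, p ∉ M → p < m → x p ≤ (t : ℝ) * lam m)}
      {x : P → ℝ |
        (∀ m ∈ M, x m = 0) ∧ (∀ p, p ∉ M → ∃ k : ℤ, x p = k) ∧
        (∀ p, p ∉ M → 0 ≤ x p) ∧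
        (∀ (s : ℕ) (c : ℕ → P), ∀ m₁ ∈ M, ∀ m₂ ∈ M, 1 ≤ s →
          (∀ k < s, c k ∉ M) → (∀ k, k + 1 < s → c k < c (k + 1)) →
          m₂ < c 0 → c (s - 1) < m₁ →
          ∑ k ∈ Finset.range s, x (c k) ≤ (t : ℝ) * lam m₁ - (t : ℝ) * lam m₂)} := by
    rintro x ⟨h0, hint, hord, hgeq, hleq⟩
    set X : P → ℝ := Stmt13.Xo M f x with hX
    have hXm : ∀ m ∈ M, X m = f m := fun m hm => if_pos hm
    have hXp : ∀ p, p ∉ M → X p = x p := fun p hp => if_neg hp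
    have hXmono : ∀ p q : P, p < q → X p ≤ X q := by
      intro p q hpq
      by_cases hp : p ∈ M <;> by_cases hq : q ∈ M
      · rw [hXm p hp, hXm q hq]; exact hfmono p hp q hq hpq.le
      · rw [hXm p hp, hXp q hq]; exact hgeq p hp q hq hpq
      · rw [hXp p hp, hXm q hq]; exact hleq q hq p hp hpq
      · rw [hXp p hp, hXp q hq]; exact hord p q hp hq hpq
    refine ⟨fun m hm => if_pos hm, ?_, ?_, ?_⟩
    · -- integrality
      intro p hp
      obtain ⟨q, hq, hqeq⟩ := Stmt13.sb_mem (X := X) (hbelow p hp)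
      obtain ⟨k, hk⟩ := hint p hp
      have : ∃ j : ℤ, X q = j := by
        by_cases hqM : q ∈ M
        · rw [hXm q hqM]; exact hfint q
        · rw [hXp q hqM]; exact hint q hqM
      obtain ⟨j, hj⟩ := this
      exact ⟨k - j, by rw [Stmt13.Phi, if_neg hp, hqeq, hk, hj]; push_cast; ring⟩
    · -- nonnegativity
      intro p hp
      rw [Stmt13.Phi, if_neg hp, sub_nonneg]
      refine Stmt13.sb_le (hbelow p hp) fun q hq => ?_
      have := hXmono q p hq
      rwa [hXp p hp] at this
    · -- chain inequalities
      intro s c m₁ hm₁ m₂ hm₂ hs hcM hinc hbot htop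
      have key : ∀ n : ℕ, (∀ k < n + 1, c k ∉ M) → (∀ k, k + 1 < n + 1 → c k < c (k + 1)) →
          m₂ < c 0 →
          ∑ k ∈ Finset.range (n + 1), Stmt13.Phi M f x (c k) ≤ X (c n) - X m₂ := by
        intro n
        induction n with
        | zero =>
          intro hcM' _ hbot'
          rw [Finset.sum_range_one, Stmt13.Phi, if_neg (hcM' 0 Nat.one_pos)]
          have h1 : X m₂ ≤ Stmt13.sb X (c 0) := Stmt13.le_sb hbot'
          have h2 : X (c 0) = x (c 0) := hXp _ (hcM' 0 Nat.one_pos)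
          linarith
        | succ n ih =>
          intro hcM' hinc' hbot'
          rw [Finset.sum_range_succ]
          have h1 := ih (fun k hk => hcM' k (by omega)) (fun k hk => hinc' k (by omega)) hbot'
          have hc : c n < c (n + 1) := hinc' n (by omega)
          have h2 : X (c n) ≤ Stmt13.sb X (c (n + 1)) := Stmt13.le_sb hc
          have h3 : X (c (n + 1)) = x (c (n + 1)) := hXp _ (hcM' (n + 1) (by omega))
          rw [Stmt13.Phi, if_neg (hcM' (n + 1) (by omega))]
          linarith
      obtain ⟨n, rfl⟩ : ∃ n, s = n + 1 := ⟨s - 1, by omega⟩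
      have hsum := key n hcM hinc hbot
      have hlast : X (c n) ≤ f m₁ := by
        rw [hXp _ (hcM n (by omega))]
        exact hleq m₁ hm₁ (c n) (hcM n (by omega)) (by simpa using htop)
      have hm2 : X m₂ = f m₂ := hXm m₂ hm₂
      have : ∑ k ∈ Finset.range (n + 1), Stmt13.Phi M f x (c k) ≤ f m₁ - f m₂ := by linarith
      exact this
  -- MapsTo Ψ C O and inverse properties
  have hPsiO : ∀ y : P → ℝ,
      y ∈ {x : P → ℝ |
        (∀ m ∈ M, x m = 0) ∧ (∀ p, p ∉ M → ∃ k : ℤ, x p = k) ∧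
        (∀ p, p ∉ M → 0 ≤ x p) ∧
        (∀ (s : ℕ) (c : ℕ → P), ∀ m₁ ∈ M, ∀ m₂ ∈ M, 1 ≤ s →
          (∀ k < s, c k ∉ M) → (∀ k, k + 1 < s → c k < c (k + 1)) →
          m₂ < c 0 → c (s - 1) < m₁ →
          ∑ k ∈ Finset.range s, x (c k) ≤ (t : ℝ) * lam m₁ - (t : ℝ) * lam m₂)} →
      (∀ p q : P, p < q → Stmt13.Xrec M f y p ≤ Stmt13.Xrec M f y q) ∧
      (∀ p, ∃ k : ℤ, Stmt13.Xrec M f y p = k) ∧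
      (∀ p, p ∉ M → ∀ m₁ ∈ M, p < m₁ → Stmt13.Xrec M f y p ≤ f m₁) := by
    rintro y ⟨h0, hint, hnn, hchain⟩
    set X : P → ℝ := Stmt13.Xrec M f y with hX
    have hXm : ∀ m ∈ M, X m = f m := fun m hm => by
      rw [hX, Stmt13.Xrec_eq, if_pos hm]
    have hXp : ∀ p, p ∉ M → X p = y p + Stmt13.sb X p := fun p hp => by
      rw [hX, Stmt13.Xrec_eq, if_neg hp]
    -- witness chain lemma
    have W : ∀ p : P, p ∉ M → ∃ m₂ ∈ M, ∃ s : ℕ, ∃ c : ℕ → P,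
        1 ≤ s ∧ (∀ k < s, c k ∉ M) ∧ (∀ k, k + 1 < s → c k < c (k + 1)) ∧
        m₂ < c 0 ∧ c (s - 1) = p ∧ X p = f m₂ + ∑ k ∈ Finset.range s, y (c k) := by
      intro p
      induction p using WellFoundedLT.induction with
      | ind p IH =>
        intro hp
        obtain ⟨r, hr, hreq⟩ := Stmt13.sb_mem (X := X) (hbelow p hp)
        by_cases hrM : r ∈ M
        · refine ⟨r, hrM, 1, fun _ => p, le_refl 1, ?_, ?_, hr, rfl, ?_⟩
          · intro k hk; interval_cases k; exact hp
          · intro k hk; omega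
          · rw [hXp p hp, hreq, hXm r hrM, Finset.sum_range_one]; ring
        · obtain ⟨m₂, hm₂, s, c, hs, hcM, hinc, hbot, hlast, hsum⟩ := IH r hr hrM
          refine ⟨m₂, hm₂, s + 1, fun k => if k < s then c k else p, by omega, ?_, ?_, ?_, ?_, ?_⟩
          · intro k hk
            by_cases h : k < s
            · simpa [h] using hcM k h
            · simpa [h] using hp
          · intro k hk
            by_cases h : k + 1 < s
            · simp only [if_pos (by omega : k < s), if_pos h]
              exact hinc k h
            · have hk' : k + 1 = s := by omega
              have hks : k < s := by omega
              simp only [if_pos hks, if_neg (by omega : ¬ k + 1 < s)]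
              have : c k = c (s - 1) := by congr 1; omega
              rw [this, hlast]
              exact hr
          · simpa [(by omega : 0 < s)] using hbot
          · simp
          · rw [hXp p hp, hreq, hsum, Finset.sum_range_succ]
            have h1 : ∑ k ∈ Finset.range s, y (if k < s then c k else p) = ∑ k ∈ Finset.range s, y (c k) :=
              Finset.sum_congr rfl fun k hk => by rw [if_pos (Finset.mem_range.mp hk)]
            rw [h1]
            simp only [lt_self_iff_false, if_false]
            ring
    have hU : ∀ p, p ∉ M → ∀ m₁ ∈ M, p < m₁ → X p ≤ f m₁ := by
      intro p hp m₁ hm₁ hpm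
      obtain ⟨m₂, hm₂, s, c, hs, hcM, hinc, hbot, hlast, hsum⟩ := W p hp
      have := hchain s c m₁ hm₁ m₂ hm₂ hs hcM hinc hbot (by rw [hlast]; exact hpm)
      rw [hsum]
      simp only [hf] at this ⊢
      linarith
    refine ⟨?_, ?_, hU⟩
    · intro p q hpq
      by_cases hq : q ∈ M
      · rw [hXm q hq]
        by_cases hp : p ∈ M
        · rw [hXm p hp]; exact hfmono p hp q hq hpq.le
        · exact hU p hp q hq hpq
      · rw [hXp q hq]
        have h1 : X p ≤ Stmt13.sb X q := Stmt13.le_sb hpq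
        have h2 : 0 ≤ y q := hnn q hq
        linarith
    · intro p
      by_cases hp : p ∈ M
      · rw [hXm p hp]; exact hfint p
      · obtain ⟨m₂, hm₂, s, c, hs, hcM, hinc, hbot, hlast, hsum⟩ := W p hp
        obtain ⟨j, hj⟩ := Stmt13.sum_int (v := fun k => y (c k)) fun k hk => hint (c k) (hcM k hk)
        obtain ⟨i, hi⟩ := hfint m₂
        exact ⟨i + j, by rw [hsum, hj, hi]; push_cast; ring⟩
  refine Set.InvOn.bijOn (f' := Stmt13.Psi M f) ⟨?_, ?_⟩ hMapΦ ?_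
  · -- left inverse: Ψ (Φ x) = x on O
    rintro x ⟨h0, hint, hord, hgeq, hleq⟩
    have hXX : ∀ p : P, Stmt13.Xrec M f (Stmt13.Phi M f x) p = Stmt13.Xo M f x p := by
      intro p
      induction p using WellFoundedLT.induction with
      | ind p IH =>
        by_cases hp : p ∈ M
        · rw [Stmt13.Xrec_eq, if_pos hp, Stmt13.Xo, if_pos hp]
        · rw [Stmt13.Xrec_eq, if_neg hp, Stmt13.sb_congr IH, Stmt13.Phi, if_neg hp,
            Stmt13.Xo, if_neg hp]
          ring
    funext p
    by_cases hp : p ∈ M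
    · rw [Stmt13.Psi, if_pos hp, h0 p hp]
    · rw [Stmt13.Psi, if_neg hp, hXX p, Stmt13.Xo, if_neg hp]
  · -- right inverse: Φ (Ψ y) = y on C
    rintro y hy
    obtain ⟨h0, hint, hnn, hchain⟩ := hy
    have hXo : Stmt13.Xo M f (Stmt13.Psi M f y) = Stmt13.Xrec M f y := by
      funext q
      by_cases hq : q ∈ M
      · rw [Stmt13.Xo, if_pos hq, Stmt13.Xrec_eq, if_pos hq]
      · rw [Stmt13.Xo, if_neg hq, Stmt13.Psi, if_neg hq]
    funext p
    by_cases hp : p ∈ M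
    · rw [Stmt13.Phi, if_pos hp, h0 p hp]
    · rw [Stmt13.Phi, if_neg hp, hXo, Stmt13.Psi, if_neg hp, Stmt13.Xrec_eq, if_neg hp]
      ring
  · -- MapsTo Ψ C O
    rintro y hy
    obtain ⟨hmono, hXint, hU⟩ := hPsiO y hy
    obtain ⟨h0, hint, hnn, hchain⟩ := hy
    set X : P → ℝ := Stmt13.Xrec M f y with hX
    have hXm : ∀ m ∈ M, X m = f m := fun m hm => by rw [hX, Stmt13.Xrec_eq, if_pos hm]
    refine ⟨fun m hm => if_pos hm, ?_, ?_, ?_, ?_⟩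
    · intro p hp
      rw [Stmt13.Psi, if_neg hp]
      exact hXint p
    · intro p q hp hq hpq
      rw [Stmt13.Psi, if_neg hp, Stmt13.Psi, if_neg hq]
      exact hmono p q hpq
    · intro m hm p hp hmp
      rw [Stmt13.Psi, if_neg hp]
      have := hmono m p hmp
      rw [hXm m hm] at this
      exact this
    · intro m hm p hp hpm
      rw [Stmt13.Psi, if_neg hp]
      exact hU p hp m hm hpm
end

section
/- The permutation w = (s_{i+k} s_{i+k+1} ⋯ s_{i+2k})(s_{i+k−1} ⋯ s_{i+2(k−1)}) ⋯ (s_{i+1} s_{i+2}) s_i ∈ S_{n+1} is triangular, for any 1 ≤ i, k with i + 2k ≤ n. -/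
/-- The ascending block `s_a s_{a+1} ⋯ s_b` of simple transpositions `s_t = (t, t+1)`. -/
def blockAsc (a b : ℕ) : Equiv.Perm ℕ :=
  ((List.range' a (b + 1 - a)).map fun t => Equiv.swap t (t + 1)).prod


/-!
On the window `[i, i + 2k + 1]` the product sends the position `i + 2m` to `i + k + 1 + m` and
`i + 2m + 1` to `i + m`, and it fixes everything else. So every inversion of `w` has an even
offset from `i` on its left and an odd offset on its right, while every value taken at an odd
offset lies below every value taken at an even offset; this already forces triangularity.
-/

lemma blockAsc_add_apply (a m x : ℕ) :
    blockAsc a (a + m) x =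
      if a ≤ x ∧ x ≤ a + m then x + 1 else if x = a + m + 1 then a else x := by
  induction m generalizing a with
  | zero =>
    simp only [blockAsc, show a + 0 + 1 - a = 1 by omega, List.range'_one, List.map_cons,
      List.map_nil, List.prod_cons, List.prod_nil, mul_one, Equiv.swap_apply_def]
    split_ifs <;> omega
  | succ m ih =>
    have hsplit :
        blockAsc a (a + (m + 1)) = Equiv.swap a (a + 1) * blockAsc (a + 1) (a + 1 + m) := by
      simp only [blockAsc, show a + (m + 1) + 1 - a = m + 2 by omega,
        show a + 1 + m + 1 - (a + 1) = m + 1 by omega, List.range'_succ, List.map_cons,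
        List.prod_cons]
    rw [hsplit, Equiv.Perm.mul_apply, ih, Equiv.swap_apply_def]
    split_ifs <;> omega

theorem isTriangularPerm_of_inversions_split (n : ℕ) (w : Equiv.Perm ℕ) (U L : Set ℕ)
    (hinv : ∀ x y, x < y → w y < w x → x ∈ U ∧ y ∈ L)
    (hLU : ∀ y ∈ L, ∀ x ∈ U, w y < w x) :
    IsTriangularPerm n w := by
  intro a b c d _ hab hbc hcd _ hca hdb
  obtain ⟨haU, hcL⟩ := hinv a c (by omega) hca
  obtain ⟨hbU, hdL⟩ := hinv b d (by omega) hdb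
  exact ⟨hLU d hdL a haU, (hLU c hcL b hbU).le⟩

def riffle (i k x : ℕ) : ℕ :=
  if x < i ∨ i + 2 * k + 1 < x then x
  else if (x - i) % 2 = 0 then i + k + 1 + (x - i) / 2 else i + (x - i) / 2

lemma prod_blockAsc_apply (i k x : ℕ) :
    ((List.range (k + 1)).map fun r => blockAsc (i + (k - r)) (i + 2 * (k - r))).prod x =
      riffle i k x := by
  induction k generalizing x with
  | zero =>
    simp only [zero_add, List.range_one, List.map_cons, List.map_nil, List.prod_cons,
      List.prod_nil, mul_one, Nat.sub_zero, mul_zero, add_zero]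
    have hblock := blockAsc_add_apply i 0 x
    rw [add_zero] at hblock
    rw [hblock, riffle]
    split_ifs <;> omega
  | succ k ih =>
    rw [List.range_succ_eq_map, List.map_cons, List.prod_cons, List.map_map]
    have htail : ((fun r => blockAsc (i + (k + 1 - r)) (i + 2 * (k + 1 - r))) ∘ Nat.succ) =
        fun r => blockAsc (i + (k - r)) (i + 2 * (k - r)) := by
      funext r
      simp only [Function.comp_apply, Nat.succ_sub_succ]
    have hhead : blockAsc (i + (k + 1 - 0)) (i + 2 * (k + 1 - 0)) =
        blockAsc (i + k + 1) (i + k + 1 + (k + 1)) := by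
      congr 1; omega
    rw [htail, hhead, Equiv.Perm.mul_apply, ih, blockAsc_add_apply, riffle, riffle]
    split_ifs <;> omega

section riffle

variable {i k : ℕ}

lemma riffle_inversion {x y : ℕ} (hxy : x < y) (h : riffle i k y < riffle i k x) :
    (i ≤ x ∧ x ≤ i + 2 * k + 1 ∧ (x - i) % 2 = 0) ∧
      (i ≤ y ∧ y ≤ i + 2 * k + 1 ∧ (y - i) % 2 = 1) := by
  unfold riffle at h
  split_ifs at h <;> omega

lemma riffle_odd_lt_even {x y : ℕ} (hy : i ≤ y ∧ y ≤ i + 2 * k + 1 ∧ (y - i) % 2 = 1)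
    (hx : i ≤ x ∧ x ≤ i + 2 * k + 1 ∧ (x - i) % 2 = 0) :
    riffle i k y < riffle i k x := by
  unfold riffle
  split_ifs <;> omega

end riffle

theorem stmt15_general (n i k : ℕ) :
    IsTriangularPerm n
      (((List.range (k + 1)).map fun r =>
        blockAsc (i + (k - r)) (i + 2 * (k - r))).prod) := by
  refine isTriangularPerm_of_inversions_split n _
    {x | i ≤ x ∧ x ≤ i + 2 * k + 1 ∧ (x - i) % 2 = 0}
    {y | i ≤ y ∧ y ≤ i + 2 * k + 1 ∧ (y - i) % 2 = 1} ?_ ?_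
  · intro x y hxy h
    rw [prod_blockAsc_apply, prod_blockAsc_apply] at h
    exact riffle_inversion hxy h
  · intro y hy x hx
    rw [prod_blockAsc_apply, prod_blockAsc_apply]
    exact riffle_odd_lt_even hy hx

/-- The permutation
`w = (s_{i+k} s_{i+k+1} ⋯ s_{i+2k})(s_{i+k−1} ⋯ s_{i+2(k−1)}) ⋯ (s_{i+1} s_{i+2}) s_i`
is triangular, for any `1 ≤ i, k` with `i + 2k ≤ n`. -/
theorem stmt15 (n i k : ℕ) (hi : 1 ≤ i) (hk : 1 ≤ k) (hn : i + 2 * k ≤ n) :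
    IsTriangularPerm n
      (((List.range (k + 1)).map fun r =>
        blockAsc (i + (k - r)) (i + 2 * (k - r))).prod) :=
  stmt15_general n i k
end
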